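/- For every d ≥ 0, the map hat_d is injective on the set A_d of d-ascent sequences; hence hat_d : A_d → Â_d is a size-preserving bijection onto the set Â_d of modified d-ascent sequences. -/

import Mathlib

/-- Entry of the word `w` at (1-based) position `i`. -/
def ent (w : List ℕ) (i : ℕ) : ℕ := w.getD (i - 1) 0

/-- `w` is an endofunction of `{1,…,n}`, where `n = w.length`. -/
def IsEndo (w : List ℕ) : Prop := ∀ x ∈ w, 1 ≤ x ∧ x ≤ w.length

/-- `w` is an inversion sequence. -/
def IsInvSeq (w : List ℕ) : Prop :=
  ∀ i ∈ Finset.Icc 1 w.length, 1 ≤ ent w i ∧ ent w i ≤ i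

/-- The set of `d`-ascents of `w` (1-based positions): position `1` is always a
`d`-ascent, and `i ≥ 2` is a `d`-ascent if `a_i > a_{i-1} - d`. -/
def ascSet (d : ℕ) (w : List ℕ) : Finset ℕ :=
  (Finset.Icc 1 w.length).filter fun i => i = 1 ∨ ent w (i - 1) < ent w i + d

/-- The number of `d`-ascents of `w`. -/
def ascCard (d : ℕ) (w : List ℕ) : ℕ := (ascSet d w).card

/-- `w` is a `d`-ascent sequence. -/
def IsDAscSeq (d : ℕ) (w : List ℕ) : Prop :=
  IsEndo w ∧ ∀ i ∈ Finset.Icc 1 w.length, ent w i ≤ 1 + ascCard d (w.take (i - 1))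

/-- One step of the map `M`: add one to every entry strictly to the left of
position `j` that is weakly larger than the entry in position `j`. -/
def Mstep (w : List ℕ) (j : ℕ) : List ℕ :=
  w.mapIdx fun k x => if k + 1 < j ∧ ent w j ≤ x then x + 1 else x

/-- The `d`-hat map: apply `Mstep` successively at the `d`-ascents of `w`,
listed in increasing order. -/
def hatd (d : ℕ) (w : List ℕ) : List ℕ :=
  ((ascSet d w).sort (· ≤ ·)).foldl Mstep w

/-- Largest entry of `w`. -/
def maxEnt (w : List ℕ) : ℕ := w.foldr max 0

/-- `w` is a Cayley permutation: its image is `{1,…,max w}`. -/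
def IsCayley (w : List ℕ) : Prop := ∀ x, x ∈ w ↔ (1 ≤ x ∧ x ≤ maxEnt w)

open Classical in
/-- The set of positions of leftmost copies of the values of `w`. -/
noncomputable def nubSet (w : List ℕ) : Finset ℕ :=
  (Finset.Icc 1 w.length).filter fun i =>
    ∀ j ∈ Finset.Icc 1 w.length, ent w j = ent w i → i ≤ j

/-- The least `d` such that `w` is a `d`-ascent sequence. -/
noncomputable def mind (w : List ℕ) : ℕ := sInf {d | IsDAscSeq d w}

/-- The set `H(w)` of all the (meaningful) `d`-hats of `w`. -/
def Hset (w : List ℕ) : Set (List ℕ) := {x | ∃ d, mind w ≤ d ∧ x = hatd d w}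

/-- The max-hat map. -/
def hatmax (w : List ℕ) : List ℕ := hatd (w.length - 1) w

/-- Weak descent set of `w`. -/
def wDesSet (w : List ℕ) : Finset ℕ :=
  (Finset.Icc 2 w.length).filter fun i => ent w i ≤ ent w (i - 1)

/-- The number of weak descents of `w`. -/
def wdes (w : List ℕ) : ℕ := (wDesSet w).card

/-- `i` is a right-left minimum index of `w`. -/
def IsRLMinIdx (w : List ℕ) (i : ℕ) : Prop :=
  1 ≤ i ∧ i ≤ w.length ∧ ∀ j, i < j → j ≤ w.length → ent w i < ent w j

/-- The set of right-left minima pairs of `w`. -/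
def rlMinP (w : List ℕ) : Set (ℕ × ℕ) :=
  {p | IsRLMinIdx w p.1 ∧ p.2 = ent w p.1}

/-- `w` is the word of a permutation of `{1,…,n}`, where `n = w.length`. -/
def IsPermWord (w : List ℕ) : Prop :=
  w.Nodup ∧ ∀ x ∈ w, 1 ≤ x ∧ x ≤ w.length

/-- Add one to every entry of `w` that is `≥ a`. -/
def plus (w : List ℕ) (a : ℕ) : List ℕ :=
  w.map fun x => if a ≤ x then x + 1 else x

/-- Add one to every entry of `w` that is `≥ a`, then append `a` at the end. -/
def plusApp (w : List ℕ) (a : ℕ) : List ℕ := plus w a ++ [a]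

/-- The index of the maximal increasing run of `w` containing position `i`:
one plus the number of descents up to position `i`. -/
def irIdx (w : List ℕ) (i : ℕ) : ℕ :=
  1 + ((Finset.Icc 2 i).filter fun j => ent w j < ent w (j - 1)).card

/-- `w` is ir-subdiagonal: every entry `c` in the `i`th maximal increasing run
satisfies `c ≤ n + 1 - i`. -/
def IsIrSub (w : List ℕ) : Prop :=
  ∀ i ∈ Finset.Icc 1 w.length, ent w i + irIdx w i ≤ w.length + 1

/-- The index of the maximal decreasing run of `w` containing position `i`. -/
def drIdx (w : List ℕ) (i : ℕ) : ℕ :=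
  1 + ((Finset.Icc 2 i).filter fun j => ent w (j - 1) < ent w j).card

/-- `w` is dr-subdiagonal: every entry `c` in the `i`th maximal decreasing run
satisfies `c ≤ n + 1 - i`. -/
def IsDrSub (w : List ℕ) : Prop :=
  ∀ i ∈ Finset.Icc 1 w.length, ent w i + drIdx w i ≤ w.length + 1

/-- `w` is a weak descent sequence. -/
def IsWDesSeq (w : List ℕ) : Prop :=
  IsInvSeq w ∧ ∀ i ∈ Finset.Icc 1 w.length, ent w i ≤ 1 + wdes (w.take (i - 1))

/-- `w` is a primitive ascent sequence: an ascent sequence with no flat steps. -/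
def IsPrimAscSeq (w : List ℕ) : Prop :=
  IsDAscSeq 0 w ∧ ∀ i ∈ Finset.Icc 1 (w.length - 1), ent w i ≠ ent w (i + 1)

/-- Insert position `i` into a list of positions sorted by the Burge order:
ascending entries, ties broken by descending position. -/
def bInsert (w : List ℕ) (i : ℕ) : List ℕ → List ℕ
  | [] => [i]
  | j :: t =>
      if ent w i < ent w j ∨ (ent w i = ent w j ∧ j ≤ i) then i :: j :: t
      else j :: bInsert w i t

/-- The permutation `burget w` obtained from the Burge transpose of the biword
with top row `1,…,n` and bottom row `w`: sort the positions `1,…,n` in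
ascending order of their entries, breaking ties in descending order of
position. -/
def burget (w : List ℕ) : List ℕ :=
  ((List.range w.length).map (· + 1)).foldr (bInsert w) []

/-! ### Auxiliary lemmas for `stmt9` -/

section Stmt9Aux

lemma my_length_Mstep (w : List ℕ) (j : ℕ) : (Mstep w j).length = w.length := by
  simp [Mstep]

lemma my_ent_lt {w : List ℕ} {i : ℕ} (h : i - 1 < w.length) : ent w i = w[i - 1] :=
  List.getD_eq_getElem w 0 h

lemma my_ent_ge {w : List ℕ} {i : ℕ} (h : w.length ≤ i - 1) : ent w i = 0 :=
  List.getD_eq_default w 0 h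

lemma my_ent_append {u : List ℕ} (c : ℕ) {i : ℕ} (h2 : i - 1 < u.length) :
    ent (u ++ [c]) i = ent u i := by
  rw [my_ent_lt (by simp; omega), my_ent_lt h2]
  exact List.getElem_append_left h2

lemma my_ent_append_last (u : List ℕ) (c : ℕ) : ent (u ++ [c]) (u.length + 1) = c := by
  rw [my_ent_lt (by simp)]
  simp

lemma my_getElem_Mstep (w : List ℕ) (j k : ℕ) (hk : k < w.length)
    (hk' : k < (Mstep w j).length) :
    (Mstep w j)[k] = if k + 1 < j ∧ ent w j ≤ w[k] then w[k] + 1 else w[k] := by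
  have := List.getElem_mapIdx (l := w) (f := fun k x => if k + 1 < j ∧ ent w j ≤ x then x + 1 else x) (i := k) (h := hk')
  simpa [Mstep, List.get_eq_getElem] using this

lemma my_ent_Mstep {w : List ℕ} {j i : ℕ} (h : j ≤ i) : ent (Mstep w j) i = ent w i := by
  rcases lt_or_ge (i - 1) w.length with hl | hl
  · rw [my_ent_lt (by rw [my_length_Mstep]; exact hl), my_ent_lt hl,
      my_getElem_Mstep w j (i - 1) hl (by rw [my_length_Mstep]; exact hl)]
    rw [if_neg]
    rintro ⟨h1, -⟩
    omega
  · rw [my_ent_ge (by rw [my_length_Mstep]; exact hl), my_ent_ge hl]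

lemma my_length_foldl (L : List ℕ) (w : List ℕ) : (L.foldl Mstep w).length = w.length := by
  induction L generalizing w with
  | nil => rfl
  | cons j L ih => rw [List.foldl_cons, ih, my_length_Mstep]

lemma my_ent_foldl {L : List ℕ} {w : List ℕ} {i : ℕ} (h : ∀ j ∈ L, j ≤ i) :
    ent (L.foldl Mstep w) i = ent w i := by
  induction L generalizing w with
  | nil => rfl
  | cons j L ih =>
    rw [List.foldl_cons, ih (fun j' hj' => h j' (List.mem_cons_of_mem _ hj')),
      my_ent_Mstep (h j List.mem_cons_self)]

lemma my_mem_ascSet {d : ℕ} {w : List ℕ} {j : ℕ} :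
    j ∈ ascSet d w ↔ (1 ≤ j ∧ j ≤ w.length) ∧ (j = 1 ∨ ent w (j - 1) < ent w j + d) := by
  simp only [ascSet, Finset.mem_filter, Finset.mem_Icc]

lemma my_mem_ascSet_append {d : ℕ} {u : List ℕ} {c j : ℕ} :
    j ∈ ascSet d (u ++ [c]) ↔
      j ∈ ascSet d u ∨ (j = u.length + 1 ∧ (j = 1 ∨ ent u u.length < c + d)) := by
  rw [my_mem_ascSet, my_mem_ascSet, List.length_append, List.length_singleton]
  constructor
  · rintro ⟨⟨hj1, hj2⟩, hP⟩
    rcases eq_or_lt_of_le hj2 with heq | hlt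
    · subst heq
      right
      refine ⟨rfl, ?_⟩
      rcases hP with h | h
      · exact Or.inl h
      · rcases eq_or_ne (u.length + 1) 1 with h1 | h1
        · exact Or.inl h1
        · right
          rw [my_ent_append c (by omega), my_ent_append_last] at h
          rwa [show u.length + 1 - 1 = u.length from by omega] at h
    · left
      refine ⟨⟨hj1, by omega⟩, ?_⟩
      rcases hP with h | h
      · exact Or.inl h
      · rcases eq_or_ne j 1 with rfl | hj
        · exact Or.inl rfl
        · right
          rwa [my_ent_append c (by omega), my_ent_append c (by omega)] at h
  · rintro (⟨⟨hj1, hj2⟩, hP⟩ | ⟨rfl, hP⟩)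
    · refine ⟨⟨hj1, by omega⟩, ?_⟩
      rcases hP with h | h
      · exact Or.inl h
      · rcases eq_or_ne j 1 with rfl | hj
        · exact Or.inl rfl
        · right
          rwa [my_ent_append c (by omega), my_ent_append c (by omega)]
    · refine ⟨⟨by omega, le_rfl⟩, ?_⟩
      rcases hP with h | h
      · exact Or.inl h
      · rcases eq_or_ne (u.length + 1) 1 with h1 | h1
        · exact Or.inl h1
        · right
          rw [my_ent_append c (by omega), my_ent_append_last]
          rwa [show u.length + 1 - 1 = u.length from by omega]

lemma my_ascSet_append (d : ℕ) (u : List ℕ) (c : ℕ) :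
    ascSet d (u ++ [c]) =
      if u.length + 1 = 1 ∨ ent u u.length < c + d
      then insert (u.length + 1) (ascSet d u) else ascSet d u := by
  split_ifs with hc
  · ext j
    rw [my_mem_ascSet_append, Finset.mem_insert]
    constructor
    · rintro (h | ⟨rfl, -⟩)
      exacts [Or.inr h, Or.inl rfl]
    · rintro (rfl | h)
      exacts [Or.inr ⟨rfl, hc⟩, Or.inl h]
  · ext j
    rw [my_mem_ascSet_append]
    constructor
    · rintro (h | ⟨rfl, hc'⟩)
      · exact h
      · exact absurd hc' hc
    · exact Or.inl

lemma my_ascCard_le_length (d : ℕ) (w : List ℕ) : ascCard d w ≤ w.length := by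
  have h := Finset.card_filter_le (Finset.Icc 1 w.length)
    (fun i => i = 1 ∨ ent w (i - 1) < ent w i + d)
  rw [Nat.card_Icc] at h
  simpa [ascCard, ascSet] using h

lemma my_ascCard_mono_take (d : ℕ) (w : List ℕ) (k : ℕ) :
    ascCard d (w.take k) ≤ ascCard d w := by
  apply Finset.card_le_card
  intro j hj
  rw [my_mem_ascSet] at hj ⊢
  obtain ⟨⟨h1, h2⟩, hP⟩ := hj
  have hlen : (w.take k).length = min k w.length := by simp
  have e1 : ∀ i, 1 ≤ i → i ≤ (w.take k).length → ent (w.take k) i = ent w i := by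
    intro i hi1 hi2
    rw [my_ent_lt (by omega), my_ent_lt (by omega : i - 1 < w.length)]
    exact List.getElem_take
  refine ⟨⟨h1, by omega⟩, ?_⟩
  rcases eq_or_ne j 1 with rfl | hj1
  · exact Or.inl rfl
  · rcases hP with h | h
    · exact Or.inl h
    · right
      rwa [e1 j h1 h2, e1 (j - 1) (by omega) (by omega)] at h

lemma my_Mstep_append {u : List ℕ} {c j : ℕ} (h1 : 1 ≤ j) (h2 : j ≤ u.length) :
    Mstep (u ++ [c]) j = Mstep u j ++ [c] := by
  have he : ent (u ++ [c]) j = ent u j := my_ent_append c (by omega)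
  have hlen : (Mstep (u ++ [c]) j).length = u.length + 1 := by
    rw [my_length_Mstep]; simp
  have hlen2 : (Mstep u j ++ [c]).length = u.length + 1 := by
    simp [my_length_Mstep]
  apply List.ext_getElem (by rw [hlen, hlen2])
  intro k hk1 hk2
  rw [hlen] at hk1
  have hkw : k < (u ++ [c]).length := by simp; omega
  rw [my_getElem_Mstep _ j k hkw (by rwa [my_length_Mstep]), he]
  rcases Nat.lt_or_ge k u.length with hk | hk
  · rw [List.getElem_append_left hk,
      List.getElem_append_left (by rwa [my_length_Mstep])]
    rw [my_getElem_Mstep u j k hk (by rwa [my_length_Mstep])]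
  · have hk' : k = u.length := by omega
    subst hk'
    rw [List.getElem_concat_length rfl, if_neg (by rintro ⟨hh, -⟩; omega),
      List.getElem_concat_length (my_length_Mstep u j).symm]

lemma my_length_plus (x : List ℕ) (a : ℕ) : (plus x a).length = x.length := by
  simp [plus]

lemma my_Mstep_append_last (u : List ℕ) (c : ℕ) :
    Mstep (u ++ [c]) (u.length + 1) = plus u c ++ [c] := by
  have hlen : (Mstep (u ++ [c]) (u.length + 1)).length = u.length + 1 := by
    rw [my_length_Mstep]; simp
  apply List.ext_getElem (by simp [hlen, my_length_plus])
  intro k hk1 hk2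
  rw [hlen] at hk1
  have hkw : k < (u ++ [c]).length := by simp; omega
  rw [my_getElem_Mstep _ _ k hkw (by rwa [my_length_Mstep]), my_ent_append_last]
  rcases Nat.lt_or_ge k u.length with hk | hk
  · rw [List.getElem_append_left hk,
      List.getElem_append_left (by rwa [my_length_plus])]
    have ht : k + 1 < u.length + 1 := by omega
    simp only [plus, List.getElem_map, ht, true_and]
  · have hk' : k = u.length := by omega
    subst hk'
    rw [List.getElem_concat_length rfl, if_neg (by rintro ⟨hh, -⟩; omega),
      List.getElem_concat_length (my_length_plus u c).symm]

lemma my_sort_insert_top {S : Finset ℕ} {n : ℕ} (h : ∀ j ∈ S, j < n) :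
    (insert n S).sort (· ≤ ·) = S.sort (· ≤ ·) ++ [n] := by
  have hn : n ∉ S := fun hm => lt_irrefl n (h n hm)
  have hperm : ((insert n S).sort (· ≤ ·)).Perm (S.sort (· ≤ ·) ++ [n]) := by
    refine (Finset.sort_perm_toList _ _).trans ?_
    refine (Finset.toList_insert hn).trans ?_
    refine (List.Perm.cons n (Finset.sort_perm_toList S (· ≤ ·)).symm).trans ?_
    exact (List.perm_append_singleton _ _).symm
  have hs2 : List.Pairwise (· ≤ ·) (S.sort (· ≤ ·) ++ [n]) := by
    refine List.pairwise_append.mpr ⟨Finset.pairwise_sort _ _, List.pairwise_singleton _ _,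
      fun a ha b hb => ?_⟩
    rw [List.mem_singleton] at hb
    subst hb
    exact le_of_lt (h a (Finset.mem_sort ((· ≤ ·) : ℕ → ℕ → Prop) |>.mp ha))
  exact hperm.eq_of_pairwise' (Finset.pairwise_sort _ _) hs2

lemma my_foldl_Mstep_append : ∀ (L : List ℕ) (u : List ℕ) (c : ℕ),
    (∀ j ∈ L, 1 ≤ j ∧ j ≤ u.length) →
    L.foldl Mstep (u ++ [c]) = L.foldl Mstep u ++ [c]
  | [], _, _, _ => rfl
  | j :: L, u, c, h => by
    rw [List.foldl_cons, List.foldl_cons,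
      my_Mstep_append (h j List.mem_cons_self).1 (h j List.mem_cons_self).2]
    exact my_foldl_Mstep_append L (Mstep u j) c (fun j' hj' => by
      rw [my_length_Mstep]
      exact h j' (List.mem_cons_of_mem _ hj'))

lemma my_hatd_nil (d : ℕ) : hatd d [] = [] := by
  have h : ascSet d ([] : List ℕ) = ∅ := by
    ext j
    rw [my_mem_ascSet]
    simp only [Finset.notMem_empty, iff_false, List.length_nil]
    rintro ⟨⟨hj1, hj2⟩, -⟩
    omega
  simp [hatd, h]

lemma my_length_hatd (d : ℕ) (w : List ℕ) : (hatd d w).length = w.length :=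
  my_length_foldl _ _

lemma my_ascSet_bounds {d : ℕ} {u : List ℕ} : ∀ j ∈ ascSet d u, 1 ≤ j ∧ j ≤ u.length :=
  fun j hj => ⟨(my_mem_ascSet.mp hj).1.1, (my_mem_ascSet.mp hj).1.2⟩

lemma my_hatd_append (d : ℕ) (u : List ℕ) (c : ℕ) :
    hatd d (u ++ [c]) =
      if u.length + 1 = 1 ∨ ent u u.length < c + d
      then plusApp (hatd d u) c
      else hatd d u ++ [c] := by
  rw [hatd, my_ascSet_append]
  split_ifs with hc
  · rw [my_sort_insert_top (fun j hj => by
      have := (my_ascSet_bounds j hj).2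
      omega)]
    rw [List.foldl_append,
      my_foldl_Mstep_append _ _ _ (fun j hj => my_ascSet_bounds j (Finset.mem_sort _ |>.mp hj))]
    rw [List.foldl_cons, List.foldl_nil]
    have hl : (((ascSet d u).sort (· ≤ ·)).foldl Mstep u).length = u.length :=
      my_length_foldl _ _
    rw [show u.length + 1 = (((ascSet d u).sort (· ≤ ·)).foldl Mstep u).length + 1 from by
      rw [hl]]
    rw [my_Mstep_append_last]
    rfl
  · rw [my_foldl_Mstep_append _ _ _
      (fun j hj => my_ascSet_bounds j (Finset.mem_sort _ |>.mp hj))]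
    rfl

lemma my_ent_hatd (d : ℕ) (u : List ℕ) {i : ℕ} (h : u.length ≤ i) :
    ent (hatd d u) i = ent u i :=
  my_ent_foldl (fun j hj =>
    le_trans (my_ascSet_bounds j (Finset.mem_sort _ |>.mp hj)).2 h)

lemma my_plus_inj {x y : List ℕ} {a : ℕ} (h : plus x a = plus y a) : x = y := by
  have hf : Function.Injective (fun z : ℕ => if a ≤ z then z + 1 else z) := by
    intro z1 z2 hz
    simp only at hz
    split_ifs at hz <;> omega
  exact List.map_injective_iff.mpr hf h

lemma my_not_mem_plus (x : List ℕ) (a : ℕ) : a ∉ plus x a := by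
  intro h
  simp only [plus, List.mem_map] at h
  obtain ⟨z, -, hz⟩ := h
  split_ifs at hz <;> omega

lemma my_mem_plus_of_lt {x : List ℕ} {v a : ℕ} (hv : v ∈ x) (h : v < a) : v ∈ plus x a := by
  simp only [plus, List.mem_map]
  exact ⟨v, hv, by rw [if_neg (by omega)]⟩

lemma my_mem_plus_of_ge {x : List ℕ} {v a : ℕ} (hv : v ∈ x) (h : a ≤ v) :
    v + 1 ∈ plus x a := by
  simp only [plus, List.mem_map]
  exact ⟨v, hv, by rw [if_pos h]⟩

lemma my_ent_plus (x : List ℕ) (a : ℕ) {i : ℕ} (h : i - 1 < x.length) :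
    ent (plus x a) i = if a ≤ ent x i then ent x i + 1 else ent x i := by
  rw [my_ent_lt (by rw [my_length_plus]; exact h), my_ent_lt h]
  simp [plus]

lemma my_dasc_append {d : ℕ} {u : List ℕ} {c : ℕ} (h : IsDAscSeq d (u ++ [c])) :
    IsDAscSeq d u ∧ 1 ≤ c ∧ c ≤ 1 + ascCard d u := by
  obtain ⟨he, hle⟩ := h
  have hc := hle (u.length + 1) (by simp [Finset.mem_Icc])
  rw [my_ent_append_last, show u.length + 1 - 1 = u.length from by omega,
    List.take_left] at hc
  have hc1 : 1 ≤ c := (he c (by simp)).1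
  refine ⟨⟨?_, ?_⟩, hc1, hc⟩
  · intro x hx
    obtain ⟨i, hi, rfl⟩ := List.getElem_of_mem hx
    refine ⟨(he _ (List.mem_append_left _ hx)).1, ?_⟩
    have h2 := hle (i + 1) (by simp [Finset.mem_Icc]; omega)
    rw [show i + 1 - 1 = i from rfl] at h2
    have hent : ent (u ++ [c]) (i + 1) = u[i] := by
      rw [my_ent_lt (by simp; omega)]
      exact List.getElem_append_left hi
    rw [hent] at h2
    have h3 : ascCard d ((u ++ [c]).take i) ≤ i :=
      le_trans (my_ascCard_le_length _ _) (by simp)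
    omega
  · intro i hi
    rw [Finset.mem_Icc] at hi
    have h2 := hle i (by simp [Finset.mem_Icc]; omega)
    rw [my_ent_append c (by omega)] at h2
    rwa [List.take_append_of_le_length (by omega)] at h2

lemma my_ascCard_append_pos {d : ℕ} {u : List ℕ} {c : ℕ}
    (hc : u.length + 1 = 1 ∨ ent u u.length < c + d) :
    ascCard d (u ++ [c]) = ascCard d u + 1 := by
  rw [ascCard, my_ascSet_append, if_pos hc,
    Finset.card_insert_of_notMem (fun hm => by
      have := (my_ascSet_bounds _ hm).2
      omega)]
  rfl

lemma my_ascCard_append_neg {d : ℕ} {u : List ℕ} {c : ℕ}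
    (hc : ¬(u.length + 1 = 1 ∨ ent u u.length < c + d)) :
    ascCard d (u ++ [c]) = ascCard d u := by
  rw [ascCard, my_ascSet_append, if_neg hc]
  rfl

lemma my_mem_hatd (d : ℕ) : ∀ (u : List ℕ), IsDAscSeq d u →
    ∀ v, 1 ≤ v → v ≤ ascCard d u → v ∈ hatd d u := by
  intro u
  induction u using List.reverseRecOn with
  | nil =>
    intro _ v hv1 hv2
    exfalso
    have h0 : ascCard d ([] : List ℕ) = 0 := by
      have he : ascSet d ([] : List ℕ) = ∅ := by
        ext j
        rw [my_mem_ascSet]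
        simp only [Finset.notMem_empty, iff_false, List.length_nil]
        rintro ⟨⟨hj1, hj2⟩, -⟩
        omega
      simp [ascCard, he]
    omega
  | append_singleton u c IH =>
    intro h v hv1 hv2
    obtain ⟨hu, hc1, hc2⟩ := my_dasc_append h
    rw [my_hatd_append]
    by_cases hA : u.length + 1 = 1 ∨ ent u u.length < c + d
    · rw [if_pos hA]
      rw [my_ascCard_append_pos hA] at hv2
      rw [plusApp]
      rcases lt_trichotomy v c with hvc | rfl | hvc
      · exact List.mem_append_left _ (my_mem_plus_of_lt (IH hu v hv1 (by omega)) hvc)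
      · exact List.mem_append_right _ (List.mem_singleton.mpr rfl)
      · have hmem : v - 1 ∈ hatd d u := IH hu (v - 1) (by omega) (by omega)
        have hmem2 := my_mem_plus_of_ge hmem (by omega : c ≤ v - 1)
        rw [show v - 1 + 1 = v from by omega] at hmem2
        exact List.mem_append_left _ hmem2
    · rw [if_neg hA]
      rw [my_ascCard_append_neg hA] at hv2
      exact List.mem_append_left _ (IH hu v hv1 hv2)

lemma my_mixed_false {d : ℕ} {u1 u2 : List ℕ} {a : ℕ}
    (h2 : IsDAscSeq d (u2 ++ [a]))
    (hm : u1.length = u2.length)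
    (hA1 : u1.length + 1 = 1 ∨ ent u1 u1.length < a + d)
    (hA2 : ¬(u2.length + 1 = 1 ∨ ent u2 u2.length < a + d))
    (heq : plus (hatd d u1) a = hatd d u2) : False := by
  push_neg at hA2
  obtain ⟨hn2, hb⟩ := hA2
  have hm1 : 1 ≤ u2.length := by omega
  have hb1 : ent u1 u1.length < a + d := by
    rcases hA1 with h | h
    · omega
    · exact h
  have e2 : ent (hatd d u2) u2.length = ent u2 u2.length := my_ent_hatd d u2 le_rfl
  have e1 : ent (hatd d u1) u1.length = ent u1 u1.length := my_ent_hatd d u1 le_rfl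
  rw [hm] at e1 hb1
  have e3 : ent (plus (hatd d u1) a) u2.length =
      if a ≤ ent (hatd d u1) u2.length then ent (hatd d u1) u2.length + 1
      else ent (hatd d u1) u2.length :=
    my_ent_plus _ _ (by rw [my_length_hatd, hm]; omega)
  rw [heq, e2, e1] at e3
  have hd1 : 1 ≤ d := by
    by_cases hle : a ≤ ent u1 u2.length
    · rw [if_pos hle] at e3
      omega
    · rw [if_neg hle] at e3
      omega
  obtain ⟨hu2, ha1, -⟩ := my_dasc_append h2
  have hle2 := hu2.2 u2.length (by rw [Finset.mem_Icc]; omega)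
  have hmono := my_ascCard_mono_take d u2 (u2.length - 1)
  have haA : a ≤ ascCard d u2 := by omega
  have hmem : a ∈ hatd d u2 := my_mem_hatd d u2 hu2 a ha1 haA
  rw [← heq] at hmem
  exact my_not_mem_plus _ _ hmem

lemma my_hatd_inj (d : ℕ) : ∀ w1 : List ℕ, IsDAscSeq d w1 → ∀ w2 : List ℕ,
    IsDAscSeq d w2 → hatd d w1 = hatd d w2 → w1 = w2 := by
  intro w1
  induction w1 using List.reverseRecOn with
  | nil =>
    intro _ w2 _ heq
    have h0 : w2.length = 0 := by
      rw [← my_length_hatd d w2, ← heq, my_hatd_nil]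
      rfl
    exact (List.length_eq_zero_iff.mp h0).symm
  | append_singleton u1 a IH =>
    intro h1 w2 h2 heq
    rcases List.eq_nil_or_concat w2 with rfl | ⟨u2, c, rfl⟩
    · exfalso
      have hl := congrArg List.length heq
      rw [my_length_hatd, my_length_hatd] at hl
      simp at hl
    · rw [List.concat_eq_append] at h2 heq ⊢
      have hlen : u1.length = u2.length := by
        have hl := congrArg List.length heq
        rw [my_length_hatd, my_length_hatd] at hl
        simpa using hl
      have hac : a = c := by
        have hc := congrArg (fun l => ent l (u1.length + 1)) heq
        rw [my_ent_hatd d _ (by simp),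
          my_ent_hatd d _ (by rw [List.length_append, List.length_singleton, hlen])] at hc
        rw [my_ent_append_last, hlen, my_ent_append_last] at hc
        exact hc
      subst hac
      rw [my_hatd_append, my_hatd_append] at heq
      by_cases hA1 : u1.length + 1 = 1 ∨ ent u1 u1.length < a + d <;>
        by_cases hA2 : u2.length + 1 = 1 ∨ ent u2 u2.length < a + d
      · rw [if_pos hA1, if_pos hA2, plusApp, plusApp] at heq
        have hpp := my_plus_inj (List.append_cancel_right heq)
        rw [IH (my_dasc_append h1).1 u2 (my_dasc_append h2).1 hpp]
      · rw [if_pos hA1, if_neg hA2, plusApp] at heq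
        exact (my_mixed_false h2 hlen hA1 hA2 (List.append_cancel_right heq)).elim
      · rw [if_neg hA1, if_pos hA2, plusApp] at heq
        exact (my_mixed_false h1 hlen.symm hA2 hA1
          (List.append_cancel_right heq.symm)).elim
      · rw [if_neg hA1, if_neg hA2] at heq
        rw [IH (my_dasc_append h1).1 u2 (my_dasc_append h2).1
          (List.append_cancel_right heq)]

end Stmt9Aux

/-- for every `d ≥ 0`, the map `hat_d` is injective on the set
`A_d` of `d`-ascent sequences; hence it is a size-preserving bijection from
`A_d` onto the set `Â_d = hat_d(A_d)` of modified `d`-ascent sequences. -/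
theorem stmt9 (d : ℕ) :
    Set.InjOn (hatd d) {w : List ℕ | IsDAscSeq d w} ∧
    (∀ w : List ℕ, IsDAscSeq d w → (hatd d w).length = w.length) ∧
    Set.BijOn (hatd d) {w : List ℕ | IsDAscSeq d w}
      (hatd d '' {w : List ℕ | IsDAscSeq d w}) := by
  have hinj : Set.InjOn (hatd d) {w : List ℕ | IsDAscSeq d w} := by
    intro w1 hw1 w2 hw2 heq
    exact my_hatd_inj d w1 hw1 w2 hw2 heq
  exact ⟨hinj, fun w _ => my_length_hatd d w, hinj.bijOn_image⟩
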